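/- For probability measures P and Q on a measurable space with P ≪ Q, the chi-square divergence satisfies the variational identity χ²(P‖Q) = sup over bounded measurable T of (2·E_P[T] − E_Q[T²] − 1). -/

import Mathlib

open MeasureTheory ProbabilityTheory Real

noncomputable def klDiv {𝓧 : Type*} [MeasurableSpace 𝓧] (P Q : Measure 𝓧) : ℝ :=
  ∫ x, Real.log ((P.rnDeriv Q x).toReal) ∂P

noncomputable def chiSq {𝓧 : Type*} [MeasurableSpace 𝓧] (P Q : Measure 𝓧) : ℝ :=
  ∫ x, ((P.rnDeriv Q x).toReal - 1)^2 ∂Q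

/-!
Write `f = dP/dQ`. For bounded `T`, `E_P[T] = E_Q[f T]`, so the objective equals
`E_Q[2 f T - T²] - 1 = E_Q[f²] - E_Q[(f - T)²] - 1`, which is at most `E_Q[f²] - 1 = χ²(P‖Q)`.
The truncations `Tₙ = min f n` make `2 f Tₙ - Tₙ²` increase to `f²`, so by monotone convergence
their objectives tend to `E_Q[f²] - 1`. When `f ∉ L²(Q)` these objectives tend to `+∞`, and both
sides are the junk value `0` of Lean's `sSup` and Bochner integral.
-/

open Filter Topology

noncomputable def chiSqObjective {𝓧 : Type*} [MeasurableSpace 𝓧] (P Q : Measure 𝓧)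
    (T : 𝓧 → ℝ) : ℝ :=
  2 * (∫ x, T x ∂P) - (∫ x, (T x)^2 ∂Q) - 1

lemma two_mul_mul_sub_sq_le_sq (a t : ℝ) : 2 * a * t - t ^ 2 ≤ a ^ 2 := by
  nlinarith [sq_nonneg (a - t)]

lemma abs_min_natCast_le {a : ℝ} (ha : 0 ≤ a) (n : ℕ) : |min a n| ≤ n := by
  rw [abs_of_nonneg (le_min ha n.cast_nonneg)]
  exact min_le_right _ _

lemma two_mul_mul_min_sub_sq_nonneg {a : ℝ} (ha : 0 ≤ a) (n : ℕ) :
    0 ≤ 2 * a * min a n - min a n ^ 2 := by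
  have h0 : 0 ≤ min a n := le_min ha n.cast_nonneg
  have h1 : min a n ≤ a := min_le_left _ _
  nlinarith

lemma monotone_two_mul_mul_min_sub_sq (a : ℝ) :
    Monotone fun n : ℕ ↦ 2 * a * min a n - min a n ^ 2 := by
  intro m n hmn
  have h1 : min a m ≤ min a n := min_le_min_left a (by exact_mod_cast hmn)
  have h2 : min a n ≤ a := min_le_left _ _
  nlinarith

lemma tendsto_two_mul_mul_min_sub_sq (a : ℝ) :
    Tendsto (fun n : ℕ ↦ 2 * a * min a n - min a n ^ 2) atTop (𝓝 (a ^ 2)) := by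
  refine tendsto_const_nhds.congr' ?_
  filter_upwards [eventually_ge_atTop ⌈a⌉₊] with n hn
  rw [min_eq_left ((Nat.le_ceil a).trans (by exact_mod_cast hn))]
  ring

section Integration

variable {α : Type*} [MeasurableSpace α] {μ : Measure α} {f T : α → ℝ} {C : ℝ}

lemma tendsto_integral_atTop_of_monotone_of_not_integrable {g : ℕ → α → ℝ} {F : α → ℝ}
    (hg : ∀ n, Integrable (g n) μ) (hg_nonneg : ∀ n, 0 ≤ᵐ[μ] g n) (hF : ¬ Integrable F μ)
    (h_mono : ∀ᵐ x ∂μ, Monotone fun n ↦ g n x)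
    (h_tendsto : ∀ᵐ x ∂μ, Tendsto (fun n ↦ g n x) atTop (𝓝 (F x))) :
    Tendsto (fun n ↦ ∫ x, g n x ∂μ) atTop atTop := by
  have hF_meas : AEStronglyMeasurable F μ :=
    aestronglyMeasurable_of_tendsto_ae atTop (fun n ↦ (hg n).1) h_tendsto
  have hF_nonneg : 0 ≤ᵐ[μ] F := by
    filter_upwards [ae_all_iff.2 hg_nonneg, h_tendsto] with x hx hxF
    exact ge_of_tendsto' hxF hx
  have hF_top : ∫⁻ x, ENNReal.ofReal (F x) ∂μ = ⊤ := by
    by_contra h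
    exact hF ((lintegral_ofReal_ne_top_iff_integrable hF_meas hF_nonneg).1 h)
  rw [← ENNReal.tendsto_ofReal_nhds_top, ← hF_top]
  simp_rw [ofReal_integral_eq_lintegral_ofReal (hg _) (hg_nonneg _)]
  refine lintegral_tendsto_of_tendsto_of_monotone (fun n ↦ (hg n).1.aemeasurable.ennreal_ofReal)
    ?_ ?_
  · filter_upwards [h_mono] with x hx m n hmn using ENNReal.ofReal_le_ofReal (hx hmn)
  · filter_upwards [h_tendsto] with x hx using (ENNReal.continuous_ofReal.tendsto _).comp hx

variable [IsFiniteMeasure μ]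

lemma integrable_sq_of_abs_le (hT : AEStronglyMeasurable T μ) (hTC : ∀ x, |T x| ≤ C) :
    Integrable (fun x ↦ T x ^ 2) μ := by
  simpa only [sq] using (Integrable.of_bound hT C (ae_of_all _ hTC)).mul_bdd hT (ae_of_all _ hTC)

lemma integral_two_mul_mul_sub_sq (hf : Integrable f μ) (hT : AEStronglyMeasurable T μ)
    (hTC : ∀ x, |T x| ≤ C) :
    ∫ x, (2 * f x * T x - T x ^ 2) ∂μ = 2 * ∫ x, f x * T x ∂μ - ∫ x, T x ^ 2 ∂μ := by
  simp_rw [mul_assoc]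
  rw [integral_sub ((hf.mul_bdd hT (ae_of_all _ hTC)).const_mul 2)
    (integrable_sq_of_abs_le hT hTC), integral_const_mul]

lemma integrable_two_mul_mul_sub_sq (hf : Integrable f μ) (hT : AEStronglyMeasurable T μ)
    (hTC : ∀ x, |T x| ≤ C) : Integrable (fun x ↦ 2 * f x * T x - T x ^ 2) μ := by
  simp_rw [mul_assoc]
  exact ((hf.mul_bdd hT (ae_of_all _ hTC)).const_mul 2).sub (integrable_sq_of_abs_le hT hTC)

lemma integrable_two_mul_mul_min_sub_sq (hf : Integrable f μ) (hf_nonneg : 0 ≤ f) (n : ℕ) :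
    Integrable (fun x ↦ 2 * f x * min (f x) n - min (f x) n ^ 2) μ :=
  integrable_two_mul_mul_sub_sq hf (hf.1.inf aestronglyMeasurable_const)
    fun x ↦ abs_min_natCast_le (hf_nonneg x) n

lemma tendsto_integral_two_mul_mul_min_sub_sq (hf : Integrable f μ) (hf_nonneg : 0 ≤ f)
    (hf2 : Integrable (fun x ↦ f x ^ 2) μ) :
    Tendsto (fun n : ℕ ↦ ∫ x, (2 * f x * min (f x) n - min (f x) n ^ 2) ∂μ) atTop
      (𝓝 (∫ x, f x ^ 2 ∂μ)) :=
  integral_tendsto_of_tendsto_of_monotone (integrable_two_mul_mul_min_sub_sq hf hf_nonneg) hf2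
    (ae_of_all _ fun x ↦ monotone_two_mul_mul_min_sub_sq (f x))
    (ae_of_all _ fun x ↦ tendsto_two_mul_mul_min_sub_sq (f x))

lemma tendsto_integral_two_mul_mul_min_sub_sq_atTop (hf : Integrable f μ) (hf_nonneg : 0 ≤ f)
    (hf2 : ¬ Integrable (fun x ↦ f x ^ 2) μ) :
    Tendsto (fun n : ℕ ↦ ∫ x, (2 * f x * min (f x) n - min (f x) n ^ 2) ∂μ) atTop atTop :=
  tendsto_integral_atTop_of_monotone_of_not_integrable
    (integrable_two_mul_mul_min_sub_sq hf hf_nonneg)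
    (fun n ↦ ae_of_all _ fun x ↦ two_mul_mul_min_sub_sq_nonneg (hf_nonneg x) n) hf2
    (ae_of_all _ fun x ↦ monotone_two_mul_mul_min_sub_sq (f x))
    (ae_of_all _ fun x ↦ tendsto_two_mul_mul_min_sub_sq (f x))

end Integration

section RadonNikodym

variable {𝓧 : Type*} [MeasurableSpace 𝓧] {P Q : Measure 𝓧} {T : 𝓧 → ℝ} {C : ℝ}

lemma chiSqObjective_eq_integral [IsFiniteMeasure P] [IsFiniteMeasure Q] (hPQ : P ≪ Q)
    (hT : Measurable T) (hTC : ∀ x, |T x| ≤ C) :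
    chiSqObjective P Q T
      = ∫ x, (2 * (P.rnDeriv Q x).toReal * T x - T x ^ 2) ∂Q - 1 := by
  rw [integral_two_mul_mul_sub_sq Measure.integrable_toReal_rnDeriv hT.aestronglyMeasurable hTC,
    integral_toReal_rnDeriv_mul hPQ]
  rfl

lemma chiSqObjective_le [IsFiniteMeasure P] [IsFiniteMeasure Q] (hPQ : P ≪ Q)
    (hf2 : Integrable (fun x ↦ (P.rnDeriv Q x).toReal ^ 2) Q)
    (hT : Measurable T) (hTC : ∀ x, |T x| ≤ C) :
    chiSqObjective P Q T ≤ ∫ x, (P.rnDeriv Q x).toReal ^ 2 ∂Q - 1 := by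
  rw [chiSqObjective_eq_integral hPQ hT hTC]
  have h_int : Integrable (fun x ↦ 2 * (P.rnDeriv Q x).toReal * T x - T x ^ 2) Q :=
    integrable_two_mul_mul_sub_sq Measure.integrable_toReal_rnDeriv hT.aestronglyMeasurable hTC
  exact sub_le_sub_right (integral_mono h_int hf2 fun x ↦ two_mul_mul_sub_sq_le_sq _ _) 1

lemma chiSq_eq_integral_sq_sub_one [IsProbabilityMeasure P] [IsProbabilityMeasure Q]
    (hPQ : P ≪ Q) (hf2 : Integrable (fun x ↦ (P.rnDeriv Q x).toReal ^ 2) Q) :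
    chiSq P Q = ∫ x, (P.rnDeriv Q x).toReal ^ 2 ∂Q - 1 := by
  set f : 𝓧 → ℝ := fun x ↦ (P.rnDeriv Q x).toReal
  have hf : Integrable f Q := Measure.integrable_toReal_rnDeriv
  have hf_one : ∫ x, f x ∂Q = 1 := by simp [f, Measure.integral_toReal_rnDeriv hPQ]
  have h_int : Integrable (fun x ↦ f x ^ 2 - 2 * f x) Q := hf2.sub (hf.const_mul 2)
  calc chiSq P Q = ∫ x, ((f x ^ 2 - 2 * f x) + 1) ∂Q := by
        unfold chiSq; congr 1; ext x; ring
    _ = ∫ x, f x ^ 2 ∂Q - 2 * ∫ x, f x ∂Q + 1 := by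
        rw [integral_add h_int (integrable_const 1),
          integral_sub (f := fun x ↦ f x ^ 2) hf2 (hf.const_mul 2), integral_const_mul]
        simp only [integral_const, probReal_univ, smul_eq_mul, mul_one]
    _ = ∫ x, f x ^ 2 ∂Q - 1 := by rw [hf_one]; ring

lemma chiSq_eq_zero_of_not_integrable [IsFiniteMeasure P] [IsFiniteMeasure Q]
    (hf2 : ¬ Integrable (fun x ↦ (P.rnDeriv Q x).toReal ^ 2) Q) : chiSq P Q = 0 := by
  refine integral_undef fun h ↦ hf2 ?_
  have hf : Integrable (fun x ↦ (P.rnDeriv Q x).toReal) Q := Measure.integrable_toReal_rnDeriv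
  refine ((h.add (hf.const_mul 2)).sub (integrable_const 1)).congr (ae_of_all _ fun x ↦ ?_)
  simp only [Pi.add_apply, Pi.sub_apply]
  ring

lemma measurable_min_rnDeriv (n : ℕ) : Measurable fun x ↦ min (P.rnDeriv Q x).toReal n :=
  (Measure.measurable_rnDeriv P Q).ennreal_toReal.min measurable_const

lemma abs_min_rnDeriv_le (n : ℕ) (x : 𝓧) : |min (P.rnDeriv Q x).toReal n| ≤ n :=
  abs_min_natCast_le ENNReal.toReal_nonneg n

lemma tendsto_chiSqObjective_min [IsFiniteMeasure P] [IsFiniteMeasure Q] (hPQ : P ≪ Q)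
    (hf2 : Integrable (fun x ↦ (P.rnDeriv Q x).toReal ^ 2) Q) :
    Tendsto (fun n : ℕ ↦ chiSqObjective P Q fun x ↦ min (P.rnDeriv Q x).toReal n) atTop
      (𝓝 (∫ x, (P.rnDeriv Q x).toReal ^ 2 ∂Q - 1)) := by
  simp_rw [chiSqObjective_eq_integral hPQ (measurable_min_rnDeriv _) (abs_min_rnDeriv_le _)]
  exact (tendsto_integral_two_mul_mul_min_sub_sq Measure.integrable_toReal_rnDeriv
    (fun _ ↦ ENNReal.toReal_nonneg) hf2).sub_const 1

lemma tendsto_chiSqObjective_min_atTop [IsFiniteMeasure P] [IsFiniteMeasure Q] (hPQ : P ≪ Q)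
    (hf2 : ¬ Integrable (fun x ↦ (P.rnDeriv Q x).toReal ^ 2) Q) :
    Tendsto (fun n : ℕ ↦ chiSqObjective P Q fun x ↦ min (P.rnDeriv Q x).toReal n) atTop
      atTop := by
  simp_rw [chiSqObjective_eq_integral hPQ (measurable_min_rnDeriv _) (abs_min_rnDeriv_le _)]
  exact tendsto_atTop_add_const_right _ (-1) (tendsto_integral_two_mul_mul_min_sub_sq_atTop
    Measure.integrable_toReal_rnDeriv (fun _ ↦ ENNReal.toReal_nonneg) hf2)

end RadonNikodym

theorem chiSq_variational_identity {𝓧 : Type*} [MeasurableSpace 𝓧]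
    (P Q : Measure 𝓧) [IsProbabilityMeasure P] [IsProbabilityMeasure Q] (hPQ : P ≪ Q) :
    chiSq P Q = sSup {r : ℝ | ∃ T : 𝓧 → ℝ, Measurable T ∧ (∃ C : ℝ, ∀ x, |T x| ≤ C) ∧
      r = 2 * (∫ x, T x ∂P) - (∫ x, (T x)^2 ∂Q) - 1} := by
  have h_mem (n : ℕ) : chiSqObjective P Q (fun x ↦ min (P.rnDeriv Q x).toReal n) ∈
      {r : ℝ | ∃ T : 𝓧 → ℝ, Measurable T ∧ (∃ C : ℝ, ∀ x, |T x| ≤ C) ∧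
        r = chiSqObjective P Q T} :=
    ⟨_, measurable_min_rnDeriv n, ⟨n, abs_min_rnDeriv_le n⟩, rfl⟩
  by_cases hf2 : Integrable (fun x ↦ (P.rnDeriv Q x).toReal ^ 2) Q
  · rw [chiSq_eq_integral_sq_sub_one hPQ hf2]
    refine ((isLUB_of_mem_closure ?_ (mem_closure_of_tendsto (tendsto_chiSqObjective_min hPQ hf2)
      (.of_forall h_mem))).csSup_eq ⟨_, h_mem 0⟩).symm
    rintro _ ⟨T, hT, ⟨C, hC⟩, rfl⟩
    exact chiSqObjective_le hPQ hf2 hT hC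
  · rw [chiSq_eq_zero_of_not_integrable hf2, Real.sSup_of_not_bddAbove]
    exact fun h_bdd ↦ not_bddAbove_of_tendsto_atTop (tendsto_chiSqObjective_min_atTop hPQ hf2)
      (h_bdd.mono (Set.range_subset_iff.2 h_mem))
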